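/- arXiv:1503.00169 — 2 statements merged into one kernel-verified Lean document; each statement's English description precedes it below -/
import Mathlib

section
/- Let V be a finite-dimensional vector space with a decomposition V = ⊕_{i=1}^m V_i that is distributive with respect to subspaces E and F. Then the decomposition is distributive with respect to E ∩ F and with respect to E + F, and (E + F) ∩ V_i = (E ∩ V_i) + (F ∩ V_i) for each i. -/
/-!
Everything happens in the modular lattice of subspaces. If `a ⊓ b = ⊥`, the `x`'s lie below `a`
and the `y`'s below `b`, then modularity gives `(x ⊔ y) ⊓ a = x`, and from this
`(x₁ ⊔ y₁) ⊓ (x₂ ⊔ y₂) = (x₁ ⊓ x₂) ⊔ (y₁ ⊓ y₂)`. Taking `a = V_i` and for `b` the sum of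
the other summands, the first identity gives the formula for `(E + F) ∩ V_i`, hence
distributivity for `E + F`; the second, by induction on the number of summands, gives
distributivity for `E ∩ F`.
-/

section Modular

variable {α : Type*} [Lattice α] [OrderBot α] [IsModularLattice α] {a b : α}

theorem Disjoint.sup_inf_eq_of_le (hab : Disjoint a b) {x y : α} (hx : x ≤ a) (hy : y ≤ b) :
    (x ⊔ y) ⊓ a = x := by
  rw [sup_inf_assoc_of_le y hx, (hab.symm.mono_left hy).eq_bot, sup_bot_eq]

theorem Disjoint.sup_inf_sup_le (hab : Disjoint a b) {x₁ x₂ y₁ y₂ : α} (hx₁ : x₁ ≤ a)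
    (hx₂ : x₂ ≤ a) (hy₁ : y₁ ≤ b) (hy₂ : y₂ ≤ b) :
    (x₁ ⊔ y₁) ⊓ (x₂ ⊔ y₂) ≤ (x₁ ⊓ x₂) ⊔ (y₁ ⊓ y₂) := by
  set z := (x₁ ⊔ y₁) ⊓ (x₂ ⊔ y₂)
  have hz_le : z ≤ (x₁ ⊓ x₂) ⊔ b :=
    calc z ≤ (x₂ ⊔ b) ⊓ (x₁ ⊔ b) :=
          le_inf (inf_le_right.trans (sup_le_sup_left hy₂ _))
            (inf_le_left.trans (sup_le_sup_left hy₁ _))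
      _ ≤ (x₂ ⊔ b) ⊓ x₁ ⊔ b := inf_sup_le_assoc_of_le x₁ le_sup_right
      _ = (x₂ ⊔ b) ⊓ a ⊓ x₁ ⊔ b := by rw [inf_assoc, inf_eq_right.mpr hx₁]
      _ = (x₁ ⊓ x₂) ⊔ b := by rw [hab.sup_inf_eq_of_le hx₂ le_rfl, inf_comm]
  have hz_inf : b ⊓ z = y₁ ⊓ y₂ := by
    rw [inf_comm, inf_inf_distrib_right, sup_comm x₁, sup_comm x₂,
      hab.symm.sup_inf_eq_of_le hy₁ hx₁, hab.symm.sup_inf_eq_of_le hy₂ hx₂]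
  have hx_le : x₁ ⊓ x₂ ≤ z :=
    le_inf (inf_le_left.trans le_sup_left) (inf_le_right.trans le_sup_left)
  calc z ≤ ((x₁ ⊓ x₂) ⊔ b) ⊓ z := le_inf hz_le le_rfl
    _ = (x₁ ⊓ x₂) ⊔ (y₁ ⊓ y₂) := by rw [sup_inf_assoc_of_le b hx_le, hz_inf]

end Modular

namespace iSupIndep

variable {α ι : Type*} [CompleteLattice α] [IsModularLattice α] {V A B : ι → α}

theorem iSup_inf_eq_of_le (hV : iSupIndep V) (hA : ∀ i, A i ≤ V i) (i : ι) :
    (⨆ j, A j) ⊓ V i = A i := by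
  rw [iSup_split_single A i]
  exact (hV i).sup_inf_eq_of_le (hA i) (iSup₂_mono fun j _ => hA j)

theorem biSup_inf_biSup_le (hV : iSupIndep V) (hA : ∀ i, A i ≤ V i) (hB : ∀ i, B i ≤ V i)
    (s : Finset ι) : (⨆ i ∈ s, A i) ⊓ (⨆ i ∈ s, B i) ≤ ⨆ i ∈ s, A i ⊓ B i := by
  classical
  induction s using Finset.induction_on with
  | empty => simp
  | insert i s hi ih =>
    have hdisj : Disjoint (V i) (⨆ j ∈ s, V j) := hV.disjoint_biSup (y := (s : Set ι)) hi
    simp only [Finset.iSup_insert]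
    calc (A i ⊔ ⨆ j ∈ s, A j) ⊓ (B i ⊔ ⨆ j ∈ s, B j)
        ≤ (A i ⊓ B i) ⊔ ((⨆ j ∈ s, A j) ⊓ ⨆ j ∈ s, B j) :=
          hdisj.sup_inf_sup_le (hA i) (hB i) (iSup₂_mono fun j _ => hA j)
            (iSup₂_mono fun j _ => hB j)
      _ ≤ (A i ⊓ B i) ⊔ ⨆ j ∈ s, A j ⊓ B j := sup_le_sup_left ih _

theorem iSup_inf_iSup [Finite ι] (hV : iSupIndep V) (hA : ∀ i, A i ≤ V i)
    (hB : ∀ i, B i ≤ V i) : (⨆ i, A i) ⊓ (⨆ i, B i) = ⨆ i, A i ⊓ B i := by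
  have := Fintype.ofFinite ι
  refine le_antisymm ?_ (le_inf (iSup_mono fun _ => inf_le_left) (iSup_mono fun _ => inf_le_right))
  simpa using hV.biSup_inf_biSup_le hA hB Finset.univ

end iSupIndep

theorem distributive_inf_sup_general {K V : Type*} [Field K] [AddCommGroup V] [Module K V]
    (m : ℕ) (Vsub : Fin m → Submodule K V)
    (hindep : iSupIndep Vsub)
    (E F : Submodule K V) (hE : E = ⨆ i, E ⊓ Vsub i) (hF : F = ⨆ i, F ⊓ Vsub i) :
    (E ⊓ F = ⨆ i, (E ⊓ F) ⊓ Vsub i) ∧ (E ⊔ F = ⨆ i, (E ⊔ F) ⊓ Vsub i) ∧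
      ∀ i, (E ⊔ F) ⊓ Vsub i = (E ⊓ Vsub i) ⊔ (F ⊓ Vsub i) := by
  have hsup_inf : ∀ i, (E ⊔ F) ⊓ Vsub i = (E ⊓ Vsub i) ⊔ (F ⊓ Vsub i) := fun i =>
    calc (E ⊔ F) ⊓ Vsub i = (⨆ j, (E ⊓ Vsub j) ⊔ (F ⊓ Vsub j)) ⊓ Vsub i := by
          rw [iSup_sup_eq, ← hE, ← hF]
      _ = (E ⊓ Vsub i) ⊔ (F ⊓ Vsub i) :=
          hindep.iSup_inf_eq_of_le (fun _ => sup_le inf_le_right inf_le_right) i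
  refine ⟨?_, by rw [iSup_congr hsup_inf, iSup_sup_eq, ← hE, ← hF], hsup_inf⟩
  calc E ⊓ F = (⨆ i, E ⊓ Vsub i) ⊓ ⨆ i, F ⊓ Vsub i := by rw [← hE, ← hF]
    _ = ⨆ i, (E ⊓ Vsub i) ⊓ (F ⊓ Vsub i) :=
        hindep.iSup_inf_iSup (fun _ => inf_le_right) fun _ => inf_le_right
    _ = ⨆ i, (E ⊓ F) ⊓ Vsub i := iSup_congr fun _ => (inf_inf_distrib_right _ _ _).symm

/-- Lemma 3 (i): a decomposition distributive w.r.t. `E` and `F` is distributive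
w.r.t. `E ∩ F` and `E + F`, and `(E + F) ∩ V_i = (E ∩ V_i) + (F ∩ V_i)`. -/
theorem distributive_inf_sup {K V : Type*} [Field K] [AddCommGroup V] [Module K V]
    [FiniteDimensional K V] (m : ℕ) (Vsub : Fin m → Submodule K V)
    (hindep : iSupIndep Vsub) (hsup : (⨆ i, Vsub i) = ⊤)
    (E F : Submodule K V) (hE : E = ⨆ i, E ⊓ Vsub i) (hF : F = ⨆ i, F ⊓ Vsub i) :
    (E ⊓ F = ⨆ i, (E ⊓ F) ⊓ Vsub i) ∧ (E ⊔ F = ⨆ i, (E ⊔ F) ⊓ Vsub i) ∧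
      ∀ i, (E ⊔ F) ⊓ Vsub i = (E ⊓ Vsub i) ⊔ (F ⊓ Vsub i) :=
  distributive_inf_sup_general m Vsub hindep E F hE hF
end

section
/- The isotropic pair A = ⟨e₁⟩, B = ⟨e₁ + e₃⟩ in ℝ³ with the standard presymplectic structure of rank 2 is indecomposable: for any orthogonal decomposition ℝ³ = V₁ ⊕ V₂ with A = (A∩V₁) ⊕ (A∩V₂) and B = (B∩V₁) ⊕ (B∩V₂), either V₁ = 0 or V₂ = 0. -/
/-!
Each of the two lines `A = ⟨e₁⟩` and `B = ⟨e₁ + e₃⟩` is an atom of the subspace lattice, so a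
compatible decomposition puts each of them entirely into `V₁` or into `V₂`. Both `e₁` and
`e₁ + e₃` have `ω`-orthogonal the plane `⟨e₁, e₃⟩` (second coordinate zero), which they span.
If they lie on the same side, the other side is `ω`-orthogonal to them, hence contained in that
plane, hence in the first side, hence zero. If they lie on different sides, each side is
`ω`-orthogonal to the vector on the other one, so `V₁ + V₂` lies in that plane, contradicting
`V₁ + V₂ = ℝ³`.
-/

/-- The standard presymplectic structure of rank 2 on `ℝ³`. -/
noncomputable def stdForm (x y : Fin 3 → ℝ) : ℝ := x 0 * y 1 - x 1 * y 0

theorem IsAtom.le_or_le_of_le_inf_sup_inf {α : Type*} [Lattice α] [OrderBot α] {a b c : α}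
    (ha : IsAtom a) (h : a ≤ a ⊓ b ⊔ a ⊓ c) : a ≤ b ∨ a ≤ c := by
  rcases ha.le_iff.mp (inf_le_left : a ⊓ b ≤ a) with hab | hab
  · rw [hab, bot_sup_eq] at h
    exact .inr (h.trans inf_le_right)
  · exact .inl (inf_eq_left.mp hab)

theorem Submodule.mem_or_mem_of_span_singleton_eq_sup {K V : Type*} [DivisionRing K]
    [AddCommGroup V] [Module K V] {x : V} {V₁ V₂ : Submodule K V}
    (h : K ∙ x = (K ∙ x ⊓ V₁) ⊔ (K ∙ x ⊓ V₂)) : x ∈ V₁ ∨ x ∈ V₂ := by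
  rcases eq_or_ne x 0 with rfl | hx
  · exact .inl V₁.zero_mem
  simpa only [span_singleton_le_iff_mem] using
    (nonzero_span_atom x hx).le_or_le_of_le_inf_sup_inf h.le

theorem stdForm_swap (x y : Fin 3 → ℝ) : stdForm y x = -stdForm x y := by
  unfold stdForm
  ring

theorem stdForm_orthogonal_symm {V W : Submodule ℝ (Fin 3 → ℝ)}
    (horth : ∀ v ∈ V, ∀ w ∈ W, stdForm v w = 0) : ∀ w ∈ W, ∀ v ∈ V, stdForm w v = 0 :=
  fun w hw v hv => by rw [stdForm_swap, horth v hv w hw, neg_zero]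

def coordOneKer : Submodule ℝ (Fin 3 → ℝ) := LinearMap.ker (LinearMap.proj 1)

theorem mem_coordOneKer {y : Fin 3 → ℝ} : y ∈ coordOneKer ↔ y 1 = 0 := Iff.rfl

theorem coordOneKer_ne_top : coordOneKer ≠ ⊤ := fun h => by
  simpa [mem_coordOneKer] using h.ge (Submodule.mem_top : ![(0 : ℝ), 1, 0] ∈ ⊤)

theorem coordOneKer_le_span :
    coordOneKer ≤ Submodule.span ℝ {![(1 : ℝ), 0, 0], ![(1 : ℝ), 0, 1]} := by
  intro y hy
  have hrep : y = (y 0 - y 2) • ![(1 : ℝ), 0, 0] + y 2 • ![(1 : ℝ), 0, 1] := by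
    funext i
    fin_cases i <;> simp [mem_coordOneKer.mp hy]
  rw [hrep]
  exact Submodule.add_mem _ (Submodule.smul_mem _ _ (Submodule.subset_span (by simp)))
    (Submodule.smul_mem _ _ (Submodule.subset_span (by simp)))

theorem le_coordOneKer_of_orthogonal {V W : Submodule ℝ (Fin 3 → ℝ)}
    (horth : ∀ v ∈ V, ∀ w ∈ W, stdForm v w = 0) {x : Fin 3 → ℝ} (hx : x ∈ V)
    (hx₀ : x 0 ≠ 0) (hx₁ : x 1 = 0) : W ≤ coordOneKer := fun w hw => by
  simpa [stdForm, hx₀, hx₁, mem_coordOneKer] using horth x hx w hw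

theorem eq_bot_of_orthogonal_of_mem {V W : Submodule ℝ (Fin 3 → ℝ)} (hdisj : Disjoint V W)
    (horth : ∀ v ∈ V, ∀ w ∈ W, stdForm v w = 0)
    (he : ![(1 : ℝ), 0, 0] ∈ V) (hu : ![(1 : ℝ), 0, 1] ∈ V) : W = ⊥ :=
  hdisj.symm.eq_bot_of_le <|
    (le_coordOneKer_of_orthogonal horth he (by simp) (by simp)).trans <|
      coordOneKer_le_span.trans <| Submodule.span_le.mpr <| by
        simp [Set.insert_subset_iff, he, hu]

theorem sup_ne_top_of_orthogonal {V W : Submodule ℝ (Fin 3 → ℝ)}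
    (horth : ∀ v ∈ V, ∀ w ∈ W, stdForm v w = 0)
    {x y : Fin 3 → ℝ} (hx : x ∈ V) (hx₀ : x 0 ≠ 0) (hx₁ : x 1 = 0)
    (hy : y ∈ W) (hy₀ : y 0 ≠ 0) (hy₁ : y 1 = 0) : V ⊔ W ≠ ⊤ := fun h =>
  coordOneKer_ne_top <| top_le_iff.mp <| h ▸ sup_le
    (le_coordOneKer_of_orthogonal (stdForm_orthogonal_symm horth) hy hy₀ hy₁)
    (le_coordOneKer_of_orthogonal horth hx hx₀ hx₁)

/-- The isotropic pair `(⟨e₁⟩, ⟨e₁ + e₃⟩)` in `ℝ³` with the standard presymplectic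
structure of rank 2 is indecomposable. -/
theorem type_five_indecomposable
    (A B : Submodule ℝ (Fin 3 → ℝ))
    (hA : A = Submodule.span ℝ {![(1:ℝ), 0, 0]})
    (hB : B = Submodule.span ℝ {![(1:ℝ), 0, 1]})
    (V₁ V₂ : Submodule ℝ (Fin 3 → ℝ))
    (hdisj : Disjoint V₁ V₂) (hsup : V₁ ⊔ V₂ = ⊤)
    (horth : ∀ v ∈ V₁, ∀ w ∈ V₂, stdForm v w = 0)
    (hAdist : A = (A ⊓ V₁) ⊔ (A ⊓ V₂))
    (hBdist : B = (B ⊓ V₁) ⊔ (B ⊓ V₂)) :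
    V₁ = ⊥ ∨ V₂ = ⊥ := by
  subst hA hB
  rcases Submodule.mem_or_mem_of_span_singleton_eq_sup hAdist with he | he <;>
    rcases Submodule.mem_or_mem_of_span_singleton_eq_sup hBdist with hu | hu
  · exact .inr (eq_bot_of_orthogonal_of_mem hdisj horth he hu)
  · exact absurd hsup (sup_ne_top_of_orthogonal horth he (by simp) (by simp) hu (by simp) (by simp))
  · exact absurd hsup (sup_ne_top_of_orthogonal horth hu (by simp) (by simp) he (by simp) (by simp))
  · exact .inl (eq_bot_of_orthogonal_of_mem hdisj.symm (stdForm_orthogonal_symm horth) he hu)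
end
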